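/- Let B be a Büchi automaton over a finite alphabet Σ with state set Q, let k ≥ 2, let w1 and u be finite words over Σ with u nonempty, and let w2 be an ω-word over Σ. If w1 · u^{2·|Q|^k} · w2 ∈ L(B), then there exists K ∈ {1, …, |Q|} such that for every N ∈ {1, …, |Q|^{k−2}}, the ω-word w1 · u^{2·|Q|^k − K·N} · w2 belongs to L(B). -/

import Mathlib

/-!
Record the states of an accepting run at the `2|Q|^k + 1` boundaries between consecutive copies
of `u`. Among any `|Q| + 1` consecutive boundaries two states coincide, giving a loop that reads
`u^g` with `1 ≤ g ≤ |Q|`. The first `|Q|^k` copies split into `|Q|^(k-1)` windows of `|Q|` copies,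
each containing such a loop, so by pigeonhole one gap `K` occurs in at least `|Q|^(k-2)` windows.
Cutting `N` of these disjoint loops out of the run yields an accepting run on
`w1 · u^(2|Q|^k - K·N) · w2`.
-/

namespace Stmt5

variable {Γ : Type*}

/-- `m`-fold concatenation of a finite word. -/
def lpow (u : List Γ) : ℕ → List Γ
  | 0 => []
  | m + 1 => u ++ lpow u m

/-- Concatenation of a finite word with an ω-word. -/
def wcat (u : List Γ) (w : ℕ → Γ) : ℕ → Γ := fun n =>
  if h : n < u.length then u.get ⟨n, h⟩ else w (n - u.length)

/-- A Büchi automaton with states `Q` and alphabet `Γ`. -/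
structure Buchi (Q Γ : Type*) where
  init : Q
  trans : Set (Q × Γ × Q)
  acc : Set Q

/-- `B` accepts the ω-word `w`: there is a run from the initial state,
respecting the transition relation, visiting accepting states infinitely often. -/
def Buchi.Accepts {Q Γ : Type*} (B : Buchi Q Γ) (w : ℕ → Γ) : Prop :=
  ∃ ρ : ℕ → Q, ρ 0 = B.init ∧ (∀ i, (ρ i, w i, ρ (i + 1)) ∈ B.trans) ∧
    ∀ n, ∃ m, n ≤ m ∧ ρ m ∈ B.acc

lemma lpow_length (u : List Γ) (m : ℕ) : (lpow u m).length = m * u.length := by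
  induction m with
  | zero => simp [lpow]
  | succ m ih => simp [lpow, ih, Nat.succ_mul, Nat.add_comm]

lemma lpow_add (u : List Γ) (a b : ℕ) : lpow u (a + b) = lpow u a ++ lpow u b := by
  induction a with
  | zero => simp [lpow]
  | succ a ih => rw [Nat.add_right_comm, lpow, lpow, ih, List.append_assoc]

lemma wcat_of_lt {v : List Γ} (w : ℕ → Γ) {n : ℕ} (h : n < v.length) :
    wcat v w n = v[n] := by
  simp [wcat, h]

lemma wcat_length_add (v : List Γ) (w : ℕ → Γ) (n : ℕ) : wcat v w (v.length + n) = w n := by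
  simp [wcat]

lemma wcat_append (v x : List Γ) (w : ℕ → Γ) : wcat (v ++ x) w = wcat v (wcat x w) := by
  funext n
  simp only [wcat, List.length_append, List.get_eq_getElem, List.getElem_append]
  split_ifs <;> first | rfl | omega | (congr 1; omega)

def cut {α : Type*} (v : ℕ → α) (p d : ℕ) : ℕ → α := fun n => if n < p then v n else v (n + d)

lemma cut_of_le {α : Type*} {v : ℕ → α} {p d n : ℕ} (hv : v p = v (p + d)) (hn : n ≤ p) :
    cut v p d n = v n := by
  rcases hn.lt_or_eq with h | rfl
  · simp [cut, h]
  · simp [cut, hv]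

lemma cut_wcat_append (x y z : List Γ) (w : ℕ → Γ) :
    cut (wcat (x ++ y ++ z) w) x.length y.length = wcat (x ++ z) w := by
  funext n
  simp only [List.append_assoc, wcat_append]
  unfold cut
  split_ifs with h
  · rw [wcat_of_lt _ h, wcat_of_lt _ h]
  · obtain ⟨n, rfl⟩ := Nat.exists_eq_add_of_le (not_lt.mp h)
    rw [Nat.add_right_comm, Nat.add_assoc, wcat_length_add, wcat_length_add, wcat_length_add]

lemma cut_wcat_lpow (w1 u : List Γ) (w2 : ℕ → Γ) {m a K : ℕ} (h : a + K ≤ m) :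
    cut (wcat (w1 ++ lpow u m) w2) (w1.length + a * u.length) (K * u.length)
      = wcat (w1 ++ lpow u (m - K)) w2 := by
  obtain ⟨r, rfl⟩ := Nat.exists_eq_add_of_le h
  have hcut := cut_wcat_append (w1 ++ lpow u a) (lpow u K) (lpow u r) w2
  simp only [List.length_append, lpow_length] at hcut
  rw [show a + K + r - K = a + r by omega, lpow_add, lpow_add, lpow_add, ← List.append_assoc,
    ← List.append_assoc, hcut, List.append_assoc]

namespace Buchi

variable {Q : Type*} (B : Buchi Q Γ)

def IsAcceptingRun (w : ℕ → Γ) (ρ : ℕ → Q) : Prop :=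
  (∀ i, (ρ i, w i, ρ (i + 1)) ∈ B.trans) ∧ ∀ n, ∃ m, n ≤ m ∧ ρ m ∈ B.acc

lemma accepts_iff {w : ℕ → Γ} : B.Accepts w ↔ ∃ ρ, ρ 0 = B.init ∧ B.IsAcceptingRun w ρ := by
  simp only [Accepts, IsAcceptingRun]

lemma IsAcceptingRun.cut {w : ℕ → Γ} {ρ : ℕ → Q} (hρ : B.IsAcceptingRun w ρ) {p d : ℕ}
    (hloop : ρ p = ρ (p + d)) : B.IsAcceptingRun (cut w p d) (cut ρ p d) := by
  obtain ⟨htr, hacc⟩ := hρ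
  refine ⟨fun i => ?_, fun n => ?_⟩
  · unfold Stmt5.cut
    rcases lt_trichotomy (i + 1) p with h | h | h
    · simpa [h, (Nat.lt_succ_self i).trans h] using htr i
    · subst h
      simpa [← hloop] using htr i
    · simpa [show ¬ i < p by omega, show ¬ i + 1 < p by omega, Nat.add_right_comm]
        using htr (i + d)
  · obtain ⟨m, hm, hacc⟩ := hacc (n + p + d)
    refine ⟨m - d, by omega, ?_⟩
    simpa [Stmt5.cut, show ¬ m - d < p by omega, show m - d + d = m by omega] using hacc

lemma accepts_of_disjoint_loops (w1 u : List Γ) (w2 : ℕ → Γ) (K : ℕ) (a : ℕ → ℕ) (I : Finset ℕ)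
    (m : ℕ) (ρ : ℕ → Q) (h0 : ρ 0 = B.init) (hρ : B.IsAcceptingRun (wcat (w1 ++ lpow u m) w2) ρ)
    (hbound : ∀ i ∈ I, a i + K ≤ m) (hsep : ∀ i ∈ I, ∀ j ∈ I, i < j → a i + K ≤ a j)
    (hloop : ∀ i ∈ I, ρ (w1.length + a i * u.length) = ρ (w1.length + (a i + K) * u.length)) :
    B.Accepts (wcat (w1 ++ lpow u (m - K * I.card)) w2) := by
  -- Cutting out the last loop leaves the run unchanged up to its start, so the other loops survive.
  induction I using Finset.induction_on_max generalizing m ρ with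
  | empty => exact B.accepts_iff.mpr ⟨ρ, h0, by simpa using hρ⟩
  | insert i I hlt ih =>
    have hi : i ∉ I := fun h => lt_irrefl i (hlt i h)
    have hbefore : ∀ j ∈ I, a j + K ≤ a i := fun j hj =>
      hsep j (Finset.mem_insert_of_mem hj) i (Finset.mem_insert_self i I) (hlt j hj)
    set p := w1.length + a i * u.length
    have hloop_i : ρ p = ρ (p + K * u.length) := by
      rw [hloop i (Finset.mem_insert_self i I), Nat.add_mul, Nat.add_assoc]
    have hρ' := hρ.cut B hloop_i
    rw [cut_wcat_lpow w1 u w2 (hbound i (Finset.mem_insert_self i I))] at hρ'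
    have hprefix : ∀ b, b ≤ a i → cut ρ p (K * u.length) (w1.length + b * u.length)
        = ρ (w1.length + b * u.length) := fun b hb =>
      cut_of_le hloop_i (Nat.add_le_add_left (Nat.mul_le_mul_right _ hb) _)
    have key := ih (m - K) (cut ρ p (K * u.length)) (by rw [cut_of_le hloop_i p.zero_le, h0]) hρ'
      (fun j hj => by have := hbefore j hj; have := hbound i (Finset.mem_insert_self i I); omega)
      (fun j hj l hl => hsep j (Finset.mem_insert_of_mem hj) l (Finset.mem_insert_of_mem hl))
      (fun j hj => by
        rw [hprefix _ (by have := hbefore j hj; omega), hprefix _ (hbefore j hj)]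
        exact hloop j (Finset.mem_insert_of_mem hj))
    rwa [Finset.card_insert_of_notMem hi, Nat.mul_succ, Nat.add_comm, ← Nat.sub_sub]

end Buchi

lemma exists_eq_add_in_window {Q : Type*} [Fintype Q] (f : ℕ → Q) (s : ℕ) :
    ∃ a g, s ≤ a ∧ 0 < g ∧ a + g ≤ s + Fintype.card Q ∧ f a = f (a + g) := by
  have hcard : (Finset.univ : Finset Q).card < (Finset.Icc s (s + Fintype.card Q)).card := by
    simp only [Finset.card_univ, Nat.card_Icc]; omega
  obtain ⟨x, hx, y, hy, hxy, hfxy⟩ :=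
    Finset.exists_ne_map_eq_of_card_lt_of_maps_to hcard fun j _ => Finset.mem_univ (f j)
  rw [Finset.mem_Icc] at hx hy
  rcases hxy.lt_or_gt with h | h
  · exact ⟨x, y - x, by omega, by omega, by omega, by rwa [Nat.add_sub_cancel' h.le]⟩
  · exact ⟨y, x - y, by omega, by omega, by omega, by rw [Nat.add_sub_cancel' h.le, hfxy]⟩

theorem buchi_pump_general {Q Γ : Type*} [Fintype Q] (B : Buchi Q Γ)
    (k : ℕ) (hk : 2 ≤ k) (w1 u : List Γ) (w2 : ℕ → Γ)
    (h : B.Accepts (wcat (w1 ++ lpow u (2 * Fintype.card Q ^ k)) w2)) :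
    ∃ K, 1 ≤ K ∧ K ≤ Fintype.card Q ∧
      ∀ N, 1 ≤ N → N ≤ Fintype.card Q ^ (k - 2) →
        B.Accepts (wcat (w1 ++ lpow u (2 * Fintype.card Q ^ k - K * N)) w2) := by
  obtain ⟨ρ, h0, hρ⟩ := B.accepts_iff.mp h
  set c := Fintype.card Q
  have hc : 0 < c := Fintype.card_pos_iff.mpr ⟨ρ 0⟩
  -- Window `i` spans the boundaries `i * c, …, i * c + c`.
  choose a g ha hg hag hloop using fun i =>
    exists_eq_add_in_window (fun j => ρ (w1.length + j * u.length)) (i * c)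
  have hwindows : (Finset.Icc 1 c).card * c ^ (k - 2) ≤ (Finset.range (c ^ (k - 1))).card := by
    rw [Nat.card_Icc, Finset.card_range, Nat.add_sub_cancel, ← pow_succ',
      show k - 2 + 1 = k - 1 by omega]
  obtain ⟨K, hK, hF⟩ := Finset.exists_le_card_fiber_of_mul_le_card_of_maps_to
    (fun i _ => Finset.mem_Icc.mpr ⟨hg i, by have := ha i; have := hag i; omega⟩)
    ⟨1, Finset.mem_Icc.mpr ⟨le_rfl, hc⟩⟩ hwindows
  rw [Finset.mem_Icc] at hK
  refine ⟨K, hK.1, hK.2, fun N _ hN => ?_⟩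
  obtain ⟨I, hIF, rfl⟩ := Finset.exists_subset_card_eq (hN.trans hF)
  have hI : ∀ i ∈ I, i < c ^ (k - 1) ∧ g i = K := fun i hi => by simpa using hIF hi
  refine B.accepts_of_disjoint_loops w1 u w2 K a I _ ρ h0 hρ (fun i hi => ?_)
    (fun i hi j hj hij => ?_) (fun i hi => (hI i hi).2 ▸ hloop i)
  · have hlast : (i + 1) * c ≤ c ^ (k - 1) * c := Nat.mul_le_mul_right c (hI i hi).1
    rw [pow_sub_one_mul (by omega)] at hlast
    have := hag i
    have := (hI i hi).2
    linarith
  · have hnext : (i + 1) * c ≤ j * c := Nat.mul_le_mul_right c hij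
    have := hag i
    have := ha j
    have := (hI i hi).2
    linarith

/-- Pumping down iterations of `u`: if `w1 · u^(2·|Q|^k) · w2 ∈ L(B)` and
`k ≥ 2`, then for some `K ∈ [1, |Q|]` and all `N ∈ [1, |Q|^(k-2)]`,
`w1 · u^(2·|Q|^k - K·N) · w2 ∈ L(B)`. -/
theorem buchi_pump {Q Γ : Type*} [Fintype Q] [Fintype Γ] (B : Buchi Q Γ)
    (k : ℕ) (hk : 2 ≤ k) (w1 u : List Γ) (hu : u ≠ []) (w2 : ℕ → Γ)
    (h : B.Accepts (wcat (w1 ++ lpow u (2 * Fintype.card Q ^ k)) w2)) :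
    ∃ K, 1 ≤ K ∧ K ≤ Fintype.card Q ∧
      ∀ N, 1 ≤ N → N ≤ Fintype.card Q ^ (k - 2) →
        B.Accepts (wcat (w1 ++ lpow u (2 * Fintype.card Q ^ k - K * N)) w2) :=
  buchi_pump_general B k hk w1 u w2 h

end Stmt5
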